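/- Let V and W be finite-dimensional real inner product spaces of grid functions with pointwise products, let B : V →ₗ[ℝ] W be a linear map (the discrete gradient) with adjoint B* : W →ₗ[ℝ] V, let Δh : V →ₗ[ℝ] V be symmetric and G = Δh∘Δh + 2a·Δh + α·id for reals a, α. Let Δt ∈ ℝ, M̄ ∈ W, q̄, φⁿ, φⁿ⁺¹, qⁿ, qⁿ⁺¹ ∈ V satisfy: μ = G((φⁿ+φⁿ⁺¹)/2) + (1/2)·((qⁿ+qⁿ⁺¹)/2)*q̄, φⁿ⁺¹ - φⁿ = -Δt·B*(M̄*(Bμ)), and qⁿ⁺¹ - qⁿ = q̄*(φⁿ⁺¹ - φⁿ). Then the discrete energy Fᵏ = (1/2)⟨φᵏ,Gφᵏ⟩ + (1/4)⟨qᵏ,qᵏ⟩ satisfies Fⁿ⁺¹ - Fⁿ = -Δt·⟨Bμ, M̄*(Bμ)⟩_W; in particular Fⁿ⁺¹ ≤ Fⁿ when Δt ≥ 0 and M̄ is pointwise nonnegative (energy dissipation law of the fully discrete EQ scheme for the Cahn–Hilliard model, Scheme 4.3). -/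

import Mathlib

/-!
For a self-adjoint `G`, the increment of the quadratic energy `½⟨φ, Gφ⟩` along a step is the
midpoint pairing `⟨G φⁿ⁺½, φⁿ⁺¹ - φⁿ⟩`; the same holds for `¼⟨q, q⟩`, and the update
`qⁿ⁺¹ - qⁿ = q̄ (φⁿ⁺¹ - φⁿ)` moves that term onto `φⁿ⁺¹ - φⁿ` as well. So `Fⁿ⁺¹ - Fⁿ = ⟨μ, φⁿ⁺¹ - φⁿ⟩`,
and the update of `φ` together with the adjointness of `B` and `B*` turns this into
`-Δt ⟨Bμ, M̄ Bμ⟩`, which is nonpositive when `Δt ≥ 0` and `M̄ ≥ 0`.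
-/

open LinearMap

namespace LinearMap.BilinForm

variable {R M : Type*} [CommRing R] [AddCommGroup M] [Module R M] {β : LinearMap.BilinForm R M}

theorem IsSymm.apply_map_sub_apply_map (hβ : β.IsSymm) {G : Module.End R M}
    (hG : IsAdjointPair β β G G) (x₀ x₁ : M) :
    β x₁ (G x₁) - β x₀ (G x₀) = β (G (x₀ + x₁)) (x₁ - x₀) := by
  have hcross : β (G x₀) x₁ = β (G x₁) x₀ := by rw [hG, ← hβ.eq]
  simp only [map_add, map_sub, LinearMap.add_apply, ← hG x₁, ← hG x₀, hcross]
  abel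

end LinearMap.BilinForm

section WeightedDot

variable {ι : Type*} [Fintype ι]

def weightedDot (w : ℝ) : LinearMap.BilinForm ℝ (ι → ℝ) := w • dotProductBilin ℝ ℝ

theorem weightedDot_apply (w : ℝ) (f g : ι → ℝ) : weightedDot w f g = w * ∑ i, f i * g i := by
  simp [weightedDot, dotProduct]

theorem weightedDot_isSymm (w : ℝ) : (weightedDot w : LinearMap.BilinForm ℝ (ι → ℝ)).IsSymm :=
  ⟨fun f g => by simp [weightedDot_apply, mul_comm]⟩

theorem weightedDot_mul_assoc (w : ℝ) (f g h : ι → ℝ) :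
    weightedDot w (f * g) h = weightedDot w f (g * h) := by
  simp [weightedDot_apply, mul_assoc]

theorem weightedDot_mul_nonneg {w : ℝ} (hw : 0 ≤ w) {m : ι → ℝ} (hm : ∀ i, 0 ≤ m i)
    (g : ι → ℝ) : 0 ≤ weightedDot w g (m * g) := by
  rw [weightedDot_apply]
  refine mul_nonneg hw (Finset.sum_nonneg fun i _ => ?_)
  simpa [mul_left_comm] using mul_nonneg (hm i) (mul_self_nonneg (g i))

end WeightedDot

noncomputable def quadratizedEnergy {E : Type*} [AddCommGroup E] [Module ℝ E]
    (β : LinearMap.BilinForm ℝ E) (G : Module.End ℝ E) (φ q : E) : ℝ :=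
  (1 / 2) * β φ (G φ) + (1 / 4) * β q q

theorem quadratizedEnergy_sub_quadratizedEnergy {ι : Type*} [Fintype ι] {w : ℝ}
    {G : Module.End ℝ (ι → ℝ)} (hG : IsAdjointPair (weightedDot w) (weightedDot w) G G)
    {qbar φ₀ φ₁ q₀ q₁ : ι → ℝ} (hq : q₁ - q₀ = qbar * (φ₁ - φ₀)) :
    quadratizedEnergy (weightedDot w) G φ₁ q₁ - quadratizedEnergy (weightedDot w) G φ₀ q₀ =
      weightedDot w
        (G ((1 / 2 : ℝ) • (φ₀ + φ₁)) + (1 / 2 : ℝ) • (((1 / 2 : ℝ) • (q₀ + q₁)) * qbar))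
        (φ₁ - φ₀) := by
  have hφ := (weightedDot_isSymm w).apply_map_sub_apply_map hG φ₀ φ₁
  have hq' : weightedDot w q₁ q₁ - weightedDot w q₀ q₀ =
      weightedDot w ((q₀ + q₁) * qbar) (φ₁ - φ₀) := by
    rw [weightedDot_mul_assoc, ← hq]
    simpa using (weightedDot_isSymm w).apply_map_sub_apply_map (G := LinearMap.id)
      isAdjointPair_id q₀ q₁
  simp only [quadratizedEnergy, map_smul, map_add, smul_mul_assoc, LinearMap.add_apply, LinearMap.smul_apply,
    smul_eq_mul] at hφ hq' ⊢
  linarith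

theorem discrete_energy_dissipation_CH_EQ_general
    (N K : ℕ)
    (wV wW : ℝ) (hwW : 0 < wW)
    (ipV : (Fin N → ℝ) → (Fin N → ℝ) → ℝ)
    (hipV : ∀ f g, ipV f g = wV * ∑ i, f i * g i)
    (ipW : (Fin K → ℝ) → (Fin K → ℝ) → ℝ)
    (hipW : ∀ f g, ipW f g = wW * ∑ i, f i * g i)
    (B : (Fin N → ℝ) →ₗ[ℝ] (Fin K → ℝ))
    (Bstar : (Fin K → ℝ) →ₗ[ℝ] (Fin N → ℝ))
    (hadj : ∀ (f : Fin N → ℝ) (g : Fin K → ℝ), ipW (B f) g = ipV f (Bstar g))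
    (Δh : (Fin N → ℝ) →ₗ[ℝ] (Fin N → ℝ))
    (hsym : ∀ f g, ipV (Δh f) g = ipV f (Δh g))
    (a α : ℝ) (G : (Fin N → ℝ) → (Fin N → ℝ))
    (hG : ∀ f, G f = Δh (Δh f) + (2 * a) • Δh f + α • f)
    (Δt : ℝ) (Mbar : Fin K → ℝ) (qbar phin phin1 qn qn1 mu : Fin N → ℝ)
    (hmu : mu = G ((1 / 2 : ℝ) • (phin + phin1)) +
      (1 / 2 : ℝ) • (((1 / 2 : ℝ) • (qn + qn1)) * qbar))
    (hphi : phin1 - phin = (-Δt) • Bstar (Mbar * B mu))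
    (hq : qn1 - qn = qbar * (phin1 - phin))
    (Fn Fn1 : ℝ)
    (hFn : Fn = (1 / 2) * ipV phin (G phin) + (1 / 4) * ipV qn qn)
    (hFn1 : Fn1 = (1 / 2) * ipV phin1 (G phin1) + (1 / 4) * ipV qn1 qn1) :
    Fn1 - Fn = -Δt * ipW (B mu) (Mbar * B mu) ∧
    (0 ≤ Δt → (∀ i, 0 ≤ Mbar i) → Fn1 ≤ Fn) := by
  have hV : ∀ f g, ipV f g = weightedDot wV f g := fun f g =>
    (hipV f g).trans (weightedDot_apply wV f g).symm
  have hW : ∀ f g, ipW f g = weightedDot wW f g := fun f g =>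
    (hipW f g).trans (weightedDot_apply wW f g).symm
  obtain rfl : G = ⇑(Δh * Δh + (2 * a) • Δh + α • 1) := funext fun f => by simp [hG]
  simp only [hV, hW] at hsym hadj hFn hFn1 ⊢
  have hGsym : IsAdjointPair (weightedDot wV) (weightedDot wV)
      ⇑(Δh * Δh + (2 * a) • Δh + α • 1) ⇑(Δh * Δh + (2 * a) • Δh + α • 1) :=
    have hΔh : IsAdjointPair (weightedDot wV) (weightedDot wV) Δh Δh := hsym
    ((hΔh.mul hΔh).add (hΔh.smul (2 * a))).add (isAdjointPair_one.smul α)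
  have hdiss : Fn1 - Fn = -Δt * weightedDot wW (B mu) (Mbar * B mu) := by
    have hE := quadratizedEnergy_sub_quadratizedEnergy hGsym hq
    rw [← hmu, hphi, map_smul, ← hadj] at hE
    simpa only [quadratizedEnergy, hFn, hFn1, LinearMap.smul_apply, smul_eq_mul] using hE
  exact ⟨hdiss, fun hΔt hM => by nlinarith [weightedDot_mul_nonneg hwW.le hM (B mu)]⟩

/-- Energy dissipation law of the fully discrete EQ scheme for the
Cahn–Hilliard model (Scheme 4.3). -/
theorem discrete_energy_dissipation_CH_EQ
    (N K : ℕ) (hN : 0 < N) (hK : 0 < K)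
    (wV wW : ℝ) (hwV : 0 < wV) (hwW : 0 < wW)
    (ipV : (Fin N → ℝ) → (Fin N → ℝ) → ℝ)
    (hipV : ∀ f g, ipV f g = wV * ∑ i, f i * g i)
    (ipW : (Fin K → ℝ) → (Fin K → ℝ) → ℝ)
    (hipW : ∀ f g, ipW f g = wW * ∑ i, f i * g i)
    (B : (Fin N → ℝ) →ₗ[ℝ] (Fin K → ℝ))
    (Bstar : (Fin K → ℝ) →ₗ[ℝ] (Fin N → ℝ))
    (hadj : ∀ (f : Fin N → ℝ) (g : Fin K → ℝ), ipW (B f) g = ipV f (Bstar g))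
    (Δh : (Fin N → ℝ) →ₗ[ℝ] (Fin N → ℝ))
    (hsym : ∀ f g, ipV (Δh f) g = ipV f (Δh g))
    (a α : ℝ) (G : (Fin N → ℝ) → (Fin N → ℝ))
    (hG : ∀ f, G f = Δh (Δh f) + (2 * a) • Δh f + α • f)
    (Δt : ℝ) (Mbar : Fin K → ℝ) (qbar phin phin1 qn qn1 mu : Fin N → ℝ)
    (hmu : mu = G ((1 / 2 : ℝ) • (phin + phin1)) +
      (1 / 2 : ℝ) • (((1 / 2 : ℝ) • (qn + qn1)) * qbar))
    (hphi : phin1 - phin = (-Δt) • Bstar (Mbar * B mu))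
    (hq : qn1 - qn = qbar * (phin1 - phin))
    (Fn Fn1 : ℝ)
    (hFn : Fn = (1 / 2) * ipV phin (G phin) + (1 / 4) * ipV qn qn)
    (hFn1 : Fn1 = (1 / 2) * ipV phin1 (G phin1) + (1 / 4) * ipV qn1 qn1) :
    Fn1 - Fn = -Δt * ipW (B mu) (Mbar * B mu) ∧
    (0 ≤ Δt → (∀ i, 0 ≤ Mbar i) → Fn1 ≤ Fn) :=
  discrete_energy_dissipation_CH_EQ_general N K wV wW hwW ipV hipV ipW hipW B Bstar hadj Δh hsym a α
    G hG Δt Mbar qbar phin phin1 qn qn1 mu hmu hphi hq Fn Fn1 hFn hFn1
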